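/- Let Ω = {x ∈ ℝ² : x₁ > −1, x₂ > −1, x₁ + x₂ < 1}, and on Ω set ℓ₁(x) = x₁ + 1, ℓ₂(x) = x₂ + 1, ℓ₃(x) = 1 − x₁ − x₂ and φ₀(x) = (1/2)(ℓ₁ log ℓ₁ + ℓ₂ log ℓ₂ + ℓ₃ log ℓ₃). Let G(x) be the Hessian matrix of φ₀ at x, which is invertible on Ω, and set H(x) = G(x)⁻¹. Define the operator 𝔏 on smooth complex-valued functions on Ω × ℝ² by (𝔏 u)(x,t) = −Σ_{i,j} ∂_{x_i}(H_{ij} ∂_{x_j} u) − Σ_{i,j} G_{ij}(x) ∂_{t_i}∂_{t_j} u. Then each of the six functions v₁ = √(ℓ₁ℓ₃) e^{−√−1 t₁}, v₂ = √(ℓ₁ℓ₂) e^{−√−1 (t₁ − t₂)}, v₃ = √(ℓ₂ℓ₃) e^{−√−1 t₂}, v₄ = √(ℓ₁ℓ₂) e^{√−1 (t₁ − t₂)}, v₅ = √(ℓ₁ℓ₃) e^{√−1 t₁}, v₆ = √(ℓ₂ℓ₃) e^{√−1 t₂} satisfies 𝔏 v = 2 v on Ω × ℝ². -/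

import Mathlib

/-- Partial derivative of `f` in the `j`-th coordinate direction at `x`. -/
noncomputable def pd (f : (Fin 2 → ℝ) → ℝ) (j : Fin 2) (x : Fin 2 → ℝ) : ℝ :=
  fderiv ℝ f x (Pi.single j 1)

/-- Partial derivative in the `i`-th action (`x`) direction. -/
noncomputable def pdx (f : (Fin 2 → ℝ) × (Fin 2 → ℝ) → ℂ) (i : Fin 2)
    (p : (Fin 2 → ℝ) × (Fin 2 → ℝ)) : ℂ :=
  fderiv ℝ f p (Pi.single i 1, 0)

/-- Partial derivative in the `i`-th angle (`t`) direction. -/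
noncomputable def pdt (f : (Fin 2 → ℝ) × (Fin 2 → ℝ) → ℂ) (i : Fin 2)
    (p : (Fin 2 → ℝ) × (Fin 2 → ℝ)) : ℂ :=
  fderiv ℝ f p (0, Pi.single i 1)

/-- The defining affine functions of the moment simplex of `ℂP²`. -/
def ell1 (x : Fin 2 → ℝ) : ℝ := x 0 + 1
def ell2 (x : Fin 2 → ℝ) : ℝ := x 1 + 1
def ell3 (x : Fin 2 → ℝ) : ℝ := 1 - x 0 - x 1

/-- The Guillemin potential of the moment simplex of `ℂP²`. -/
noncomputable def phi0 (x : Fin 2 → ℝ) : ℝ :=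
  (1 / 2) * (ell1 x * Real.log (ell1 x) + ell2 x * Real.log (ell2 x)
    + ell3 x * Real.log (ell3 x))

/-- The Hessian matrix of the Guillemin potential. -/
noncomputable def Gmat (x : Fin 2 → ℝ) : Matrix (Fin 2) (Fin 2) ℝ :=
  Matrix.of fun i j => pd (fun y => pd phi0 j y) i x

/-- The inverse Hessian matrix. -/
noncomputable def Hmat (x : Fin 2 → ℝ) : Matrix (Fin 2) (Fin 2) ℝ := (Gmat x)⁻¹

/-- The complex toric Laplacian (soliton vector `a = 0`) in action-angle coordinates. -/
noncomputable def Lop (u : (Fin 2 → ℝ) × (Fin 2 → ℝ) → ℂ)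
    (p : (Fin 2 → ℝ) × (Fin 2 → ℝ)) : ℂ :=
  -(∑ i, ∑ j, pdx (fun q => (Hmat q.1 i j : ℂ) * pdx u j q) i p)
    - ∑ i, ∑ j, (Gmat p.1 i j : ℂ) * pdt (fun q => pdt u j q) i p

/-- The six root functions of `ℂP²` in action-angle coordinates. -/
noncomputable def v1 (p : (Fin 2 → ℝ) × (Fin 2 → ℝ)) : ℂ :=
  (Real.sqrt (ell1 p.1 * ell3 p.1) : ℂ) * Complex.exp (-(Complex.I * (p.2 0 : ℂ)))
noncomputable def v2 (p : (Fin 2 → ℝ) × (Fin 2 → ℝ)) : ℂ :=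
  (Real.sqrt (ell1 p.1 * ell2 p.1) : ℂ)
    * Complex.exp (-(Complex.I * ((p.2 0 : ℂ) - (p.2 1 : ℂ))))
noncomputable def v3 (p : (Fin 2 → ℝ) × (Fin 2 → ℝ)) : ℂ :=
  (Real.sqrt (ell2 p.1 * ell3 p.1) : ℂ) * Complex.exp (-(Complex.I * (p.2 1 : ℂ)))
noncomputable def v4 (p : (Fin 2 → ℝ) × (Fin 2 → ℝ)) : ℂ :=
  (Real.sqrt (ell1 p.1 * ell2 p.1) : ℂ)
    * Complex.exp (Complex.I * ((p.2 0 : ℂ) - (p.2 1 : ℂ)))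
noncomputable def v5 (p : (Fin 2 → ℝ) × (Fin 2 → ℝ)) : ℂ :=
  (Real.sqrt (ell1 p.1 * ell3 p.1) : ℂ) * Complex.exp (Complex.I * (p.2 0 : ℂ))
noncomputable def v6 (p : (Fin 2 → ℝ) × (Fin 2 → ℝ)) : ℂ :=
  (Real.sqrt (ell2 p.1 * ell3 p.1) : ℂ) * Complex.exp (Complex.I * (p.2 1 : ℂ))

/-!
On the open simplex the Hessian of `φ₀` is `G = ½ Σₖ ∇ℓₖ ∇ℓₖᵀ / ℓₖ`, and because
`ℓ₁ + ℓ₂ + ℓ₃ = 3` its inverse `H` has polynomial entries. On a Fourier mode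
`u = S(x) e^{i⟨a,t⟩}` the operator separates: `𝔏u = (⟨a, G a⟩ S − div (H ∇S)) e^{i⟨a,t⟩}`.
For a root function `S = √(ℓ_a ℓ_b)` the identity `H ∇ log ℓₖ = 2 eₖ − ⅔ (x + 1)` (with `e₃ = 0`)
makes the flux `H ∇S = S (c − ⅔ (x + 1))` with `c = e_a + e_b`, whose divergence is
`⟨∇S, c − ⅔ (x + 1)⟩ − 4/3 S`. The equation `𝔏u = 2u` thus becomes a polynomial identity in
`ℓ₁, ℓ₂, ℓ₃`, which holds exactly when `⟨a, G a⟩ = ½ (1/ℓ_a + 1/ℓ_b)`, i.e. for the roots `a`.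
-/

open Filter Topology Matrix

noncomputable section

def HasPartialsAt (f : (Fin 2 → ℝ) → ℝ) (a b : ℝ) (x : Fin 2 → ℝ) : Prop :=
  HasFDerivAt f (a • ContinuousLinearMap.proj 0 + b • ContinuousLinearMap.proj 1 :
    (Fin 2 → ℝ) →L[ℝ] ℝ) x

namespace HasPartialsAt

variable {f g : (Fin 2 → ℝ) → ℝ} {a b c d : ℝ} {x : Fin 2 → ℝ}

theorem pd_zero (h : HasPartialsAt f a b x) : pd f 0 x = a := by
  simp [pd, h.fderiv]

theorem pd_one (h : HasPartialsAt f a b x) : pd f 1 x = b := by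
  simp [pd, h.fderiv]

theorem congr_partials (h : HasPartialsAt f a b x) (ha : a = c) (hb : b = d) :
    HasPartialsAt f c d x :=
  ha ▸ hb ▸ h

theorem congr_of_eventuallyEq (h : HasPartialsAt f a b x) (hg : g =ᶠ[𝓝 x] f) :
    HasPartialsAt g a b x :=
  HasFDerivAt.congr_of_eventuallyEq h hg

theorem add (hf : HasPartialsAt f a b x) (hg : HasPartialsAt g c d x) :
    HasPartialsAt (fun y => f y + g y) (a + c) (b + d) x :=
  (HasFDerivAt.add hf hg).congr_fderiv (by ext v; simp; ring)

theorem sub (hf : HasPartialsAt f a b x) (hg : HasPartialsAt g c d x) :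
    HasPartialsAt (fun y => f y - g y) (a - c) (b - d) x :=
  (HasFDerivAt.sub hf hg).congr_fderiv (by ext v; simp; ring)

theorem mul (hf : HasPartialsAt f a b x) (hg : HasPartialsAt g c d x) :
    HasPartialsAt (fun y => f y * g y) (a * g x + f x * c) (b * g x + f x * d) x :=
  (HasFDerivAt.mul hf hg).congr_fderiv (by ext v; simp; ring)

theorem const_mul (hf : HasPartialsAt f a b x) (c : ℝ) :
    HasPartialsAt (fun y => c * f y) (c * a) (c * b) x :=
  (HasFDerivAt.const_mul hf c).congr_fderiv (by ext v; simp; ring)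

theorem log (hf : HasPartialsAt f a b x) (hx : f x ≠ 0) :
    HasPartialsAt (fun y => Real.log (f y)) (a / f x) (b / f x) x :=
  ((Real.hasDerivAt_log hx).comp_hasFDerivAt x hf).congr_fderiv
    (by ext v; simp; field_simp)

theorem sqrt (hf : HasPartialsAt f a b x) (hx : f x ≠ 0) :
    HasPartialsAt (fun y => √(f y)) (a / (2 * √(f x))) (b / (2 * √(f x))) x :=
  ((Real.hasDerivAt_sqrt hx).comp_hasFDerivAt x hf).congr_fderiv
    (by ext v; simp; field_simp)

end HasPartialsAt

theorem hasPartialsAt_const (c : ℝ) (x : Fin 2 → ℝ) : HasPartialsAt (fun _ => c) 0 0 x :=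
  (hasFDerivAt_const c x).congr_fderiv (by ext v; simp)

theorem hasPartialsAt_apply_zero (x : Fin 2 → ℝ) : HasPartialsAt (fun y => y 0) 1 0 x :=
  (hasFDerivAt_apply 0 x).congr_fderiv (by ext v; simp)

theorem hasPartialsAt_apply_one (x : Fin 2 → ℝ) : HasPartialsAt (fun y => y 1) 0 1 x :=
  (hasFDerivAt_apply 1 x).congr_fderiv (by ext v; simp)

theorem hasPartialsAt_ell1 (x : Fin 2 → ℝ) : HasPartialsAt ell1 1 0 x :=
  ((hasPartialsAt_apply_zero x).add (hasPartialsAt_const 1 x)).congr_partials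
    (add_zero 1) (add_zero 0)

theorem hasPartialsAt_ell2 (x : Fin 2 → ℝ) : HasPartialsAt ell2 0 1 x :=
  ((hasPartialsAt_apply_one x).add (hasPartialsAt_const 1 x)).congr_partials
    (add_zero 0) (add_zero 1)

theorem hasPartialsAt_ell3 (x : Fin 2 → ℝ) : HasPartialsAt ell3 (-1) (-1) x :=
  (((hasPartialsAt_const 1 x).sub (hasPartialsAt_apply_zero x)).sub
    (hasPartialsAt_apply_one x)).congr_partials (by norm_num) (by norm_num)

def simplex : Set (Fin 2 → ℝ) := {x | -1 < x 0 ∧ -1 < x 1 ∧ x 0 + x 1 < 1}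

theorem isOpen_simplex : IsOpen simplex :=
  (isOpen_lt continuous_const (continuous_apply 0)).inter
    ((isOpen_lt continuous_const (continuous_apply 1)).inter
      (isOpen_lt ((continuous_apply 0).add (continuous_apply 1)) continuous_const))

theorem ell1_pos {x : Fin 2 → ℝ} (hx : x ∈ simplex) : 0 < ell1 x := by
  obtain ⟨h, -, -⟩ := hx; unfold ell1; linarith

theorem ell2_pos {x : Fin 2 → ℝ} (hx : x ∈ simplex) : 0 < ell2 x := by
  obtain ⟨-, h, -⟩ := hx; unfold ell2; linarith

theorem ell3_pos {x : Fin 2 → ℝ} (hx : x ∈ simplex) : 0 < ell3 x := by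
  obtain ⟨-, -, h⟩ := hx; unfold ell3; linarith

def hessianPhi0 (x : Fin 2 → ℝ) : Matrix (Fin 2) (Fin 2) ℝ :=
  (1 / 2 : ℝ) • !![(ell1 x)⁻¹ + (ell3 x)⁻¹, (ell3 x)⁻¹; (ell3 x)⁻¹, (ell2 x)⁻¹ + (ell3 x)⁻¹]

-- `adj G / det G`, where `det G = 3 / (4 ℓ₁ ℓ₂ ℓ₃)` because `ℓ₁ + ℓ₂ + ℓ₃ = 3`.
def invHessianPhi0 (x : Fin 2 → ℝ) : Matrix (Fin 2) (Fin 2) ℝ :=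
  (2 / 3 : ℝ) • !![ell1 x * (ell2 x + ell3 x), -(ell1 x * ell2 x);
    -(ell1 x * ell2 x), ell2 x * (ell1 x + ell3 x)]

theorem hasPartialsAt_phi0 {x : Fin 2 → ℝ} (hx : x ∈ simplex) :
    HasPartialsAt phi0 ((Real.log (ell1 x) - Real.log (ell3 x)) / 2)
      ((Real.log (ell2 x) - Real.log (ell3 x)) / 2) x := by
  have h1 := (hasPartialsAt_ell1 x).mul ((hasPartialsAt_ell1 x).log (ell1_pos hx).ne')
  have h2 := (hasPartialsAt_ell2 x).mul ((hasPartialsAt_ell2 x).log (ell2_pos hx).ne')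
  have h3 := (hasPartialsAt_ell3 x).mul ((hasPartialsAt_ell3 x).log (ell3_pos hx).ne')
  refine (((h1.add h2).add h3).const_mul (1 / 2)).congr_partials ?_ ?_ <;>
    field_simp [(ell1_pos hx).ne', (ell2_pos hx).ne', (ell3_pos hx).ne'] <;> ring

theorem pd_congr_of_eventuallyEq {f g : (Fin 2 → ℝ) → ℝ} {x : Fin 2 → ℝ} (h : f =ᶠ[𝓝 x] g)
    (j : Fin 2) : pd f j x = pd g j x := by
  simp only [pd, h.fderiv_eq]

theorem Gmat_eq_hessianPhi0 {x : Fin 2 → ℝ} (hx : x ∈ simplex) : Gmat x = hessianPhi0 x := by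
  have hnear : ∀ᶠ y in 𝓝 x, y ∈ simplex := isOpen_simplex.mem_nhds hx
  have h0 : HasPartialsAt (fun y => pd phi0 0 y) (hessianPhi0 x 0 0) (hessianPhi0 x 1 0) x := by
    refine (((hasPartialsAt_ell1 x).log (ell1_pos hx).ne').sub
      ((hasPartialsAt_ell3 x).log (ell3_pos hx).ne') |>.const_mul (1 / 2)
      |>.congr_of_eventuallyEq ?_).congr_partials ?_ ?_
    · filter_upwards [hnear] with y hy
      rw [(hasPartialsAt_phi0 hy).pd_zero]; ring
    all_goals simp [hessianPhi0]; ring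
  have h1 : HasPartialsAt (fun y => pd phi0 1 y) (hessianPhi0 x 0 1) (hessianPhi0 x 1 1) x := by
    refine (((hasPartialsAt_ell2 x).log (ell2_pos hx).ne').sub
      ((hasPartialsAt_ell3 x).log (ell3_pos hx).ne') |>.const_mul (1 / 2)
      |>.congr_of_eventuallyEq ?_).congr_partials ?_ ?_
    · filter_upwards [hnear] with y hy
      rw [(hasPartialsAt_phi0 hy).pd_one]; ring
    all_goals simp [hessianPhi0]; ring
  ext i j
  fin_cases i <;> fin_cases j
  exacts [h0.pd_zero, h1.pd_zero, h0.pd_one, h1.pd_one]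

theorem Hmat_eq_invHessianPhi0 {x : Fin 2 → ℝ} (hx : x ∈ simplex) :
    Hmat x = invHessianPhi0 x := by
  have h1 := (ell1_pos hx).ne'; have h2 := (ell2_pos hx).ne'; have h3 := (ell3_pos hx).ne'
  rw [Hmat, Gmat_eq_hessianPhi0 hx]
  refine Matrix.inv_eq_right_inv ?_
  ext i j
  fin_cases i <;> fin_cases j <;>
    simp [hessianPhi0, invHessianPhi0, Matrix.mul_apply] <;> field_simp <;>
    simp only [ell1, ell2, ell3] <;> ring

theorem differentiableAt_Hmat {x : Fin 2 → ℝ} (hx : x ∈ simplex) (i j : Fin 2) :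
    DifferentiableAt ℝ (fun y => Hmat y i j) x := by
  have hH : (fun y => Hmat y i j) =ᶠ[𝓝 x] fun y => invHessianPhi0 y i j := by
    filter_upwards [isOpen_simplex.mem_nhds hx] with y hy
    rw [Hmat_eq_invHessianPhi0 hy]
  refine DifferentiableAt.congr_of_eventuallyEq ?_ hH
  fin_cases i <;> fin_cases j <;> simp [invHessianPhi0, ell1, ell2, ell3] <;> fun_prop

def fourierMode (S : (Fin 2 → ℝ) → ℝ) (a : Fin 2 → ℝ) (q : (Fin 2 → ℝ) × (Fin 2 → ℝ)) : ℂ :=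
  S q.1 * Complex.exp (Complex.I * (a ⬝ᵥ q.2 : ℝ))

section FourierMode

open Complex ContinuousLinearMap

variable {S : (Fin 2 → ℝ) → ℝ} {x : Fin 2 → ℝ} (a t : Fin 2 → ℝ)

theorem hasFDerivAt_fourierMode {S' : (Fin 2 → ℝ) →L[ℝ] ℝ} (hS : HasFDerivAt S S' x) :
    HasFDerivAt (fourierMode S a)
      ((S x : ℂ) • exp (I * (a ⬝ᵥ t : ℝ)) •
          I • ofRealCLM.comp (∑ k, a k • (proj k).comp (snd ℝ (Fin 2 → ℝ) (Fin 2 → ℝ)))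
        + exp (I * (a ⬝ᵥ t : ℝ)) • ofRealCLM.comp (S'.comp (fst ℝ (Fin 2 → ℝ) (Fin 2 → ℝ))))
      (x, t) := by
  have hphase : HasFDerivAt (fun q : (Fin 2 → ℝ) × (Fin 2 → ℝ) => a ⬝ᵥ q.2)
      (∑ k, a k • (proj k).comp (snd ℝ (Fin 2 → ℝ) (Fin 2 → ℝ))) (x, t) := by
    simp only [dotProduct]
    exact HasFDerivAt.fun_sum fun k _ =>
      ((proj k).comp (snd ℝ (Fin 2 → ℝ) (Fin 2 → ℝ))).hasFDerivAt.const_mul (a k)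
  have hexp := (hasDerivAt_exp _).comp_hasFDerivAt (x, t)
    ((ofRealCLM.hasFDerivAt.comp (x, t) hphase).const_mul I)
  exact (ofRealCLM.hasFDerivAt.comp (x, t) (hS.comp (x, t) hasFDerivAt_fst)).mul hexp

theorem pdx_fourierMode (hS : DifferentiableAt ℝ S x) (i : Fin 2) :
    pdx (fourierMode S a) i (x, t) = pd S i x * exp (I * (a ⬝ᵥ t : ℝ)) := by
  simp [pdx, pd, (hasFDerivAt_fourierMode a t hS.hasFDerivAt).fderiv, mul_comm]

theorem pdt_fourierMode (hS : DifferentiableAt ℝ S x) (i : Fin 2) :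
    pdt (fourierMode S a) i (x, t) = I * a i * fourierMode S a (x, t) := by
  fin_cases i <;>
    simp [pdt, fourierMode, (hasFDerivAt_fourierMode a t hS.hasFDerivAt).fderiv] <;> ring

end FourierMode

def divHGrad (S : (Fin 2 → ℝ) → ℝ) (x : Fin 2 → ℝ) : ℝ :=
  ∑ i, pd (fun y => ∑ j, Hmat y i j * pd S j y) i x

section Separation

open Complex

variable {S : (Fin 2 → ℝ) → ℝ} {x : Fin 2 → ℝ} (a t : Fin 2 → ℝ)

theorem differentiableAt_pd_of_contDiffAt (hS : ContDiffAt ℝ 2 S x) (j : Fin 2) :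
    DifferentiableAt ℝ (fun y => pd S j y) x :=
  ((hS.fderiv_right (m := 1) (by norm_num)).differentiableAt one_ne_zero).clm_apply
    (differentiableAt_const _)

theorem pdx_weighted_pdx_fourierMode (hS : ∀ᶠ y in 𝓝 x, DifferentiableAt ℝ S y)
    (w : (Fin 2 → ℝ) → ℝ) (j : Fin 2) (hw : DifferentiableAt ℝ (fun y => w y * pd S j y) x)
    (i : Fin 2) :
    pdx (fun q => (w q.1 : ℂ) * pdx (fourierMode S a) j q) i (x, t)
      = pd (fun y => w y * pd S j y) i x * exp (I * (a ⬝ᵥ t : ℝ)) := by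
  have hnear : (fun q => (w q.1 : ℂ) * pdx (fourierMode S a) j q)
      =ᶠ[𝓝 (x, t)] fourierMode (fun y => w y * pd S j y) a := by
    filter_upwards [continuous_fst.continuousAt.preimage_mem_nhds hS] with q hq
    rw [← Prod.mk.eta (p := q), pdx_fourierMode a q.2 hq, fourierMode]
    push_cast
    ring
  rw [pdx, hnear.fderiv_eq, ← pdx, pdx_fourierMode a t hw]

theorem pdt_pdt_fourierMode (hS : ∀ᶠ y in 𝓝 x, DifferentiableAt ℝ S y) (i j : Fin 2) :
    pdt (fun q => pdt (fourierMode S a) j q) i (x, t)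
      = -(a i * a j) * fourierMode S a (x, t) := by
  have hnear : (fun q => pdt (fourierMode S a) j q)
      =ᶠ[𝓝 (x, t)] fun q => I * a j * fourierMode S a q := by
    filter_upwards [continuous_fst.continuousAt.preimage_mem_nhds hS] with q hq
    rw [← Prod.mk.eta (p := q), pdt_fourierMode a q.2 hq]
  have hdiff : DifferentiableAt ℝ (fourierMode S a) (x, t) :=
    (hasFDerivAt_fourierMode a t hS.self_of_nhds.hasFDerivAt).differentiableAt
  rw [pdt, hnear.fderiv_eq, fderiv_const_mul hdiff, _root_.smul_apply, ← pdt,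
    pdt_fourierMode a t hS.self_of_nhds, smul_eq_mul]
  linear_combination (a i * a j * fourierMode S a (x, t)) * I_mul_I

theorem Lop_fourierMode (hx : x ∈ simplex) (hS : ContDiffAt ℝ 2 S x) :
    Lop (fourierMode S a) (x, t)
      = ((a ⬝ᵥ (Gmat x *ᵥ a) * S x - divHGrad S x : ℝ) : ℂ) * exp (I * (a ⬝ᵥ t : ℝ)) := by
  have hSnear : ∀ᶠ y in 𝓝 x, DifferentiableAt ℝ S y :=
    (hS.eventually (by simp)).mono fun y hy => hy.differentiableAt (by norm_num)
  have hW (i j : Fin 2) : DifferentiableAt ℝ (fun y => Hmat y i j * pd S j y) x :=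
    (differentiableAt_Hmat hx i j).mul (differentiableAt_pd_of_contDiffAt hS j)
  have hdiv : divHGrad S x = ∑ i, ∑ j, pd (fun y => Hmat y i j * pd S j y) i x := by
    refine Finset.sum_congr rfl fun i _ => ?_
    rw [pd, fderiv_fun_sum fun j _ => hW i j, _root_.sum_apply]
    rfl
  simp only [Lop, pdx_weighted_pdx_fourierMode a t hSnear _ _ (hW _ _),
    pdt_pdt_fourierMode a t hSnear, hdiv, fourierMode]
  simp only [dotProduct, Matrix.mulVec, Fin.sum_univ_two]
  push_cast
  ring

end Separation

section Flux

variable {S : (Fin 2 → ℝ) → ℝ} {x : Fin 2 → ℝ}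

theorem divHGrad_of_flux (c : Fin 2 → ℝ) (hS : DifferentiableAt ℝ S x)
    (hflux : ∀ᶠ y in 𝓝 x, ∀ i, ∑ j, Hmat y i j * pd S j y = S y * (c i - 2 / 3 * (y i + 1))) :
    divHGrad S x = ∑ i, pd S i x * (c i - 2 / 3 * (x i + 1)) - 4 / 3 * S x := by
  have hprod (i : Fin 2) : pd (fun y => S y * (c i - 2 / 3 * (y i + 1))) i x
      = pd S i x * (c i - 2 / 3 * (x i + 1)) - 2 / 3 * S x := by
    have hP : HasFDerivAt (fun y : Fin 2 → ℝ => c i - 2 / 3 * (y i + 1))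
        (-((2 / 3 : ℝ) • ContinuousLinearMap.proj i)) x :=
      ((((ContinuousLinearMap.proj (R := ℝ) (φ := fun _ : Fin 2 => ℝ) i).hasFDerivAt).add_const
        1).const_mul (2 / 3 : ℝ)).const_sub (c i)
    rw [pd, (hS.hasFDerivAt.fun_mul hP).fderiv]
    simp [pd]
    ring
  have hdiv : divHGrad S x = ∑ i, pd (fun y => S y * (c i - 2 / 3 * (y i + 1))) i x :=
    Finset.sum_congr rfl fun i _ => pd_congr_of_eventuallyEq (hflux.mono fun y hy => hy i) i
  simp only [hdiv, hprod, Fin.sum_univ_two]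
  ring

theorem Lop_fourierMode_eq_two_mul_of_flux (c a t : Fin 2 → ℝ) (hx : x ∈ simplex)
    (hS : ContDiffAt ℝ 2 S x)
    (hflux : ∀ y ∈ simplex, ∀ i, ∑ j, Hmat y i j * pd S j y = S y * (c i - 2 / 3 * (y i + 1)))
    (hroot : a ⬝ᵥ (hessianPhi0 x *ᵥ a) * S x
      - (∑ i, pd S i x * (c i - 2 / 3 * (x i + 1)) - 4 / 3 * S x) = 2 * S x) :
    Lop (fourierMode S a) (x, t) = 2 * fourierMode S a (x, t) := by
  have hnear : ∀ᶠ y in 𝓝 x, ∀ i, ∑ j, Hmat y i j * pd S j y = S y * (c i - 2 / 3 * (y i + 1)) :=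
    eventually_of_mem (isOpen_simplex.mem_nhds hx) hflux
  rw [Lop_fourierMode a t hx hS, Gmat_eq_hessianPhi0 hx,
    divHGrad_of_flux c (hS.differentiableAt (by norm_num)) hnear, hroot, fourierMode]
  push_cast
  ring

end Flux

theorem dotProduct_hessianPhi0_mulVec (x a : Fin 2 → ℝ) :
    a ⬝ᵥ (hessianPhi0 x *ᵥ a)
      = (a 0 ^ 2 / ell1 x + a 1 ^ 2 / ell2 x + (a 0 + a 1) ^ 2 / ell3 x) / 2 := by
  simp [hessianPhi0, dotProduct, mulVec, Fin.sum_univ_two]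
  ring

-- The hypotheses of `Lop_fourierMode_eq_two_mul_of_flux` multiplied by `2 √(f g)` and `√(f g)`;
-- `(p g + f r, q g + f s)` is `∇(f g)`.
theorem Lop_fourierMode_sqrt_mul {f g : (Fin 2 → ℝ) → ℝ} {p q r s : ℝ} (c a t : Fin 2 → ℝ)
    {x : Fin 2 → ℝ} (hx : x ∈ simplex) (hf : ∀ y, HasPartialsAt f p q y)
    (hg : ∀ y, HasPartialsAt g r s y) (hfC : ContDiff ℝ 2 f) (hgC : ContDiff ℝ 2 g)
    (hpos : ∀ y ∈ simplex, 0 < f y * g y)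
    (hflux : ∀ y ∈ simplex, ∀ i, invHessianPhi0 y i 0 * (p * g y + f y * r)
      + invHessianPhi0 y i 1 * (q * g y + f y * s) = 2 * (f y * g y) * (c i - 2 / 3 * (y i + 1)))
    (hroot : a ⬝ᵥ (hessianPhi0 x *ᵥ a) * (f x * g x)
      - ((p * g x + f x * r) * (c 0 - 2 / 3 * (x 0 + 1))
        + (q * g x + f x * s) * (c 1 - 2 / 3 * (x 1 + 1))) / 2 = 2 / 3 * (f x * g x)) :
    Lop (fourierMode (fun y => √(f y * g y)) a) (x, t)
      = 2 * fourierMode (fun y => √(f y * g y)) a (x, t) := by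
  have hgrad {y} (hy : y ∈ simplex) := ((hf y).mul (hg y)).sqrt (hpos y hy).ne'
  refine Lop_fourierMode_eq_two_mul_of_flux c a t hx
    ((hfC.contDiffAt.mul hgC.contDiffAt).sqrt (hpos x hx).ne') (fun y hy i => ?_) ?_
  · rw [Fin.sum_univ_two, Hmat_eq_invHessianPhi0 hy, (hgrad hy).pd_zero, (hgrad hy).pd_one]
    have hS2 := Real.mul_self_sqrt (hpos y hy).le
    have hS := (Real.sqrt_pos.2 (hpos y hy)).ne'
    set S := √(f y * g y)
    field_simp
    linear_combination 3 * hflux y hy i - 2 * (3 * c i - 2 * (y i + 1)) * hS2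
  · rw [Fin.sum_univ_two, (hgrad hx).pd_zero, (hgrad hx).pd_one]
    have hS2 := Real.mul_self_sqrt (hpos x hx).le
    have hS := (Real.sqrt_pos.2 (hpos x hx)).ne'
    set S := √(f x * g x)
    field_simp
    linear_combination 6 * hroot + (6 * a ⬝ᵥ (hessianPhi0 x *ᵥ a) - 4) * hS2

theorem Lop_fourierMode_sqrt_ell1_mul_ell3 {x : Fin 2 → ℝ} (hx : x ∈ simplex) (σ : ℝ)
    (hσ : σ ^ 2 = 1) (t : Fin 2 → ℝ) :
    Lop (fourierMode (fun y => √(ell1 y * ell3 y)) ![σ, 0]) (x, t)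
      = 2 * fourierMode (fun y => √(ell1 y * ell3 y)) ![σ, 0] (x, t) := by
  refine Lop_fourierMode_sqrt_mul ![1, 0] _ t hx hasPartialsAt_ell1 hasPartialsAt_ell3
    (by unfold ell1; fun_prop) (by unfold ell3; fun_prop)
    (fun y hy => mul_pos (ell1_pos hy) (ell3_pos hy)) (fun y _ i => ?_) ?_
  · fin_cases i <;> simp [invHessianPhi0] <;> simp only [ell1, ell2, ell3] <;> ring
  · have h1 := (ell1_pos hx).ne'; have h3 := (ell3_pos hx).ne'
    rw [dotProduct_hessianPhi0_mulVec]
    simp [hσ]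
    field_simp
    simp only [ell1, ell3]
    ring

theorem Lop_fourierMode_sqrt_ell1_mul_ell2 {x : Fin 2 → ℝ} (hx : x ∈ simplex) (σ : ℝ)
    (hσ : σ ^ 2 = 1) (t : Fin 2 → ℝ) :
    Lop (fourierMode (fun y => √(ell1 y * ell2 y)) ![σ, -σ]) (x, t)
      = 2 * fourierMode (fun y => √(ell1 y * ell2 y)) ![σ, -σ] (x, t) := by
  refine Lop_fourierMode_sqrt_mul ![1, 1] _ t hx hasPartialsAt_ell1 hasPartialsAt_ell2
    (by unfold ell1; fun_prop) (by unfold ell2; fun_prop)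
    (fun y hy => mul_pos (ell1_pos hy) (ell2_pos hy)) (fun y _ i => ?_) ?_
  · fin_cases i <;> simp [invHessianPhi0] <;> simp only [ell1, ell2, ell3] <;> ring
  · have h1 := (ell1_pos hx).ne'; have h2 := (ell2_pos hx).ne'
    rw [dotProduct_hessianPhi0_mulVec]
    simp [hσ]
    field_simp
    simp only [ell1, ell2]
    ring

theorem Lop_fourierMode_sqrt_ell2_mul_ell3 {x : Fin 2 → ℝ} (hx : x ∈ simplex) (σ : ℝ)
    (hσ : σ ^ 2 = 1) (t : Fin 2 → ℝ) :
    Lop (fourierMode (fun y => √(ell2 y * ell3 y)) ![0, σ]) (x, t)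
      = 2 * fourierMode (fun y => √(ell2 y * ell3 y)) ![0, σ] (x, t) := by
  refine Lop_fourierMode_sqrt_mul ![0, 1] _ t hx hasPartialsAt_ell2 hasPartialsAt_ell3
    (by unfold ell2; fun_prop) (by unfold ell3; fun_prop)
    (fun y hy => mul_pos (ell2_pos hy) (ell3_pos hy)) (fun y _ i => ?_) ?_
  · fin_cases i <;> simp [invHessianPhi0] <;> simp only [ell1, ell2, ell3] <;> ring
  · have h2 := (ell2_pos hx).ne'; have h3 := (ell3_pos hx).ne'
    rw [dotProduct_hessianPhi0_mulVec]
    simp [hσ]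
    field_simp
    simp only [ell2, ell3]
    ring

theorem v1_eq_fourierMode : v1 = fourierMode (fun y => √(ell1 y * ell3 y)) ![-1, 0] := by
  funext q; simp only [v1, fourierMode]; congr 2; simp [dotProduct]
theorem v2_eq_fourierMode : v2 = fourierMode (fun y => √(ell1 y * ell2 y)) ![-1, 1] := by
  funext q; simp only [v2, fourierMode]; congr 2; simp [dotProduct]; ring
theorem v3_eq_fourierMode : v3 = fourierMode (fun y => √(ell2 y * ell3 y)) ![0, -1] := by
  funext q; simp only [v3, fourierMode]; congr 2; simp [dotProduct]
theorem v4_eq_fourierMode : v4 = fourierMode (fun y => √(ell1 y * ell2 y)) ![1, -1] := by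
  funext q; simp only [v4, fourierMode]; congr 2; simp [dotProduct]; ring
theorem v5_eq_fourierMode : v5 = fourierMode (fun y => √(ell1 y * ell3 y)) ![1, 0] := by
  funext q; simp only [v5, fourierMode]; congr 2; simp [dotProduct]
theorem v6_eq_fourierMode : v6 = fourierMode (fun y => √(ell2 y * ell3 y)) ![0, 1] := by
  funext q; simp only [v6, fourierMode]; congr 2; simp [dotProduct]

end

/-- Section 6.1: the six root functions of `ℂP²` are eigenfunctions with eigenvalue `2`
of the complex toric Laplacian of the Fubini-Study metric. -/
theorem stmt16 :
    ∀ x ∈ {x : Fin 2 → ℝ | -1 < x 0 ∧ -1 < x 1 ∧ x 0 + x 1 < 1}, ∀ t : Fin 2 → ℝ,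
      Lop v1 (x, t) = 2 * v1 (x, t) ∧ Lop v2 (x, t) = 2 * v2 (x, t)
      ∧ Lop v3 (x, t) = 2 * v3 (x, t) ∧ Lop v4 (x, t) = 2 * v4 (x, t)
      ∧ Lop v5 (x, t) = 2 * v5 (x, t) ∧ Lop v6 (x, t) = 2 * v6 (x, t) := by
  intro x hx t
  rw [v1_eq_fourierMode, v2_eq_fourierMode, v3_eq_fourierMode, v4_eq_fourierMode,
    v5_eq_fourierMode, v6_eq_fourierMode]
  have hneg := neg_one_sq (R := ℝ)
  exact ⟨Lop_fourierMode_sqrt_ell1_mul_ell3 hx (-1) hneg t,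
    by simpa using Lop_fourierMode_sqrt_ell1_mul_ell2 hx (-1) hneg t,
    Lop_fourierMode_sqrt_ell2_mul_ell3 hx (-1) hneg t,
    Lop_fourierMode_sqrt_ell1_mul_ell2 hx 1 (one_pow 2) t,
    Lop_fourierMode_sqrt_ell1_mul_ell3 hx 1 (one_pow 2) t,
    Lop_fourierMode_sqrt_ell2_mul_ell3 hx 1 (one_pow 2) t⟩
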